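/- Let u_n be a Lucas sequence with u_1 = 1, u_2 = A, u_{n+1} = A·u_n − B·u_{n−1}, A,B coprime nonzero integers. If ℓ is an odd prime with ℓ ∤ B and ℓ | (A^2 − 4B), and m_ℓ > 2 (i.e., ℓ ∤ A), then the least index n ≥ 2 with ℓ | u_n is n = ℓ. -/

import Mathlib

/-!
Modulo `ℓ` the characteristic polynomial `X² - A X + B` has the double root `A / 2`, so the
Lucas sequence behaves like `u n = n (A / 2) ^ (n - 1)`: without dividing,
`2 ^ (n - 1) u n ≡ n A ^ (n - 1) (mod ℓ)`. As `2` and `A` are units mod `ℓ`, `ℓ ∣ u n ↔ ℓ ∣ n`.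
-/

section DoubleRoot

variable {R : Type*} [CommRing R] {a b : R} {v : ℕ → R}

theorem two_pow_mul_eq_of_sq_eq_four_mul (hab : a ^ 2 = 4 * b) (h0 : v 0 = 1) (h1 : v 1 = a)
    (hrec : ∀ n, v (n + 2) = a * v (n + 1) - b * v n) (n : ℕ) :
    2 ^ n * v n = (n + 1) * a ^ n := by
  induction n using Nat.twoStepInduction with
  | zero => simp [h0]
  | one => rw [h1]; ring
  | more n ih₀ ih₁ =>
    rw [hrec]
    push_cast at ih₁ ⊢
    linear_combination 2 * a * ih₁ - 4 * b * ih₀ + (n + 1) * a ^ n * hab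

theorem eq_zero_iff_natCast_succ_eq_zero_of_sq_eq_four_mul [IsDomain R] (h2 : (2 : R) ≠ 0)
    (ha : a ≠ 0) (hab : a ^ 2 = 4 * b) (h0 : v 0 = 1) (h1 : v 1 = a)
    (hrec : ∀ n, v (n + 2) = a * v (n + 1) - b * v n) (n : ℕ) :
    v n = 0 ↔ ((n + 1 : ℕ) : R) = 0 := by
  have key := two_pow_mul_eq_of_sq_eq_four_mul hab h0 h1 hrec n
  push_cast
  constructor
  · intro hv
    rw [hv, mul_zero, eq_comm, mul_eq_zero] at key
    exact key.resolve_right (pow_ne_zero n ha)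
  · intro hn
    rw [hn, zero_mul, mul_eq_zero] at key
    exact key.resolve_left (pow_ne_zero n h2)

end DoubleRoot

theorem ZMod.two_ne_zero_of_odd {ℓ : ℕ} (hℓ : ℓ.Prime) (hodd : Odd ℓ) : (2 : ZMod ℓ) ≠ 0 := by
  intro h
  have : ℓ ∣ 2 := (ZMod.natCast_eq_zero_iff 2 ℓ).1 (by exact_mod_cast h)
  have := (Nat.prime_dvd_prime_iff_eq hℓ Nat.prime_two).1 this
  subst this
  exact Nat.not_even_iff_odd.2 hodd even_two

theorem rank_of_apparition_eq_ell_general (A B : ℤ)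
    (u : ℕ → ℤ)
    (h1 : u 1 = 1) (h2 : u 2 = A)
    (hrec : ∀ n, 2 ≤ n → u (n + 1) = A * u n - B * u (n - 1))
    (ℓ : ℕ) (hℓ : ℓ.Prime) (hodd : Odd ℓ)
    (hℓA : ¬ (ℓ : ℤ) ∣ A)
    (hdisc : (ℓ : ℤ) ∣ (A ^ 2 - 4 * B)) :
    (ℓ : ℤ) ∣ u ℓ ∧ ∀ n : ℕ, 2 ≤ n → n < ℓ → ¬ (ℓ : ℤ) ∣ u n := by
  have : Fact ℓ.Prime := ⟨hℓ⟩
  have hab : (A : ZMod ℓ) ^ 2 = 4 * B := by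
    have := (ZMod.intCast_zmod_eq_zero_iff_dvd _ ℓ).2 hdisc
    push_cast at this
    linear_combination this
  have ha : (A : ZMod ℓ) ≠ 0 := mt (ZMod.intCast_zmod_eq_zero_iff_dvd _ ℓ).1 hℓA
  have hrec_mod (n : ℕ) : (u (n + 3) : ZMod ℓ) = A * u (n + 2) - B * u (n + 1) := by
    rw [hrec (n + 2) (by omega), Nat.add_succ_sub_one]
    push_cast
    ring
  have dvd_u_iff (n : ℕ) (hn : 1 ≤ n) : (ℓ : ℤ) ∣ u n ↔ ℓ ∣ n := by
    obtain ⟨m, rfl⟩ := Nat.exists_eq_add_of_le' hn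
    rw [← ZMod.intCast_zmod_eq_zero_iff_dvd, ← ZMod.natCast_eq_zero_iff]
    exact eq_zero_iff_natCast_succ_eq_zero_of_sq_eq_four_mul (v := fun m ↦ (u (m + 1) : ZMod ℓ))
      (ZMod.two_ne_zero_of_odd hℓ hodd) ha hab (by simp [h1]) (by simp [h2]) hrec_mod m
  refine ⟨(dvd_u_iff ℓ hℓ.one_lt.le).2 dvd_rfl, fun n hn hnℓ hdvd ↦ ?_⟩
  have := Nat.le_of_dvd (by omega) ((dvd_u_iff n (by omega)).1 hdvd)
  omega

/-- Bilu–Hanrot–Voutier, Corollary 2.2(1) for Lucas sequences: if `ℓ` is an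
odd prime with `ℓ ∤ B`, `ℓ ∤ A` and `ℓ ∣ A² - 4B`, then the least index
`n ≥ 2` with `ℓ ∣ u n` is `n = ℓ`. -/
theorem rank_of_apparition_eq_ell (A B : ℤ) (hA : A ≠ 0) (hB : B ≠ 0)
    (hAB : IsCoprime A B) (u : ℕ → ℤ)
    (h1 : u 1 = 1) (h2 : u 2 = A)
    (hrec : ∀ n, 2 ≤ n → u (n + 1) = A * u n - B * u (n - 1))
    (ℓ : ℕ) (hℓ : ℓ.Prime) (hodd : Odd ℓ)
    (hℓB : ¬ (ℓ : ℤ) ∣ B) (hℓA : ¬ (ℓ : ℤ) ∣ A)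
    (hdisc : (ℓ : ℤ) ∣ (A ^ 2 - 4 * B)) :
    (ℓ : ℤ) ∣ u ℓ ∧ ∀ n : ℕ, 2 ≤ n → n < ℓ → ¬ (ℓ : ℤ) ∣ u n :=
  rank_of_apparition_eq_ell_general A B u h1 h2 hrec ℓ hℓ hodd hℓA hdisc
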